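/- arXiv:2601.10934 — 3 statements merged into one kernel-verified Lean document; each statement's English description precedes it below -/
import Mathlib

section
/- Let r ≥ 1. Let P be a polynomial with complex coefficients in the r² matrix entries and let k ∈ ℕ, and define f(A) = P(A)/det(A)^k for A ∈ GL_r(ℂ) (so f is a regular function on GL_r). Suppose f(S·A) = f(A) for every S ∈ SL_r(ℂ) and every A ∈ GL_r(ℂ). Then there exist a univariate polynomial Q ∈ ℂ[T] and m ∈ ℕ such that f(A) = Q(det A)/(det A)^m for all A ∈ GL_r(ℂ). In other words, every SL_r(ℂ)-invariant regular function on GL_r(ℂ) is the pullback along det of a Laurent polynomial on ℂˣ. -/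
/-- Every `SL_r(ℂ)`-invariant regular function on `GL_r(ℂ)`
(i.e. a function of the form `A ↦ P(entries of A) / det(A)^k` invariant under left
multiplication by matrices of determinant one) is the pullback along `det` of a Laurent
polynomial: there are `Q ∈ ℂ[T]` and `m ∈ ℕ` with `f A = Q(det A) / (det A)^m`. -/
theorem SL_invariant_regular_function_factors_through_det (r : ℕ) (hr : 1 ≤ r)
    (P : MvPolynomial (Fin r × Fin r) ℂ) (k : ℕ)
    (f : Matrix (Fin r) (Fin r) ℂ → ℂ)
    (hf : ∀ A : Matrix (Fin r) (Fin r) ℂ,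
      f A = MvPolynomial.eval (fun ij => A ij.1 ij.2) P / A.det ^ k)
    (hinv : ∀ S A : Matrix (Fin r) (Fin r) ℂ, S.det = 1 → IsUnit A.det →
      f (S * A) = f A) :
    ∃ (Q : Polynomial ℂ) (m : ℕ), ∀ A : Matrix (Fin r) (Fin r) ℂ, IsUnit A.det →
      f A = Polynomial.eval A.det Q / A.det ^ m := by
  set i0 : Fin r := ⟨0, hr⟩ with hi0
  set g : Fin r × Fin r → Polynomial ℂ :=
    fun ij => if ij.1 = i0 ∧ ij.2 = i0 then Polynomial.X
      else if ij.1 = ij.2 then 1 else 0 with hg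
  refine ⟨MvPolynomial.eval₂ Polynomial.C g P, k, fun A hA => ?_⟩
  set t : ℂ := A.det with ht
  -- the diagonal matrix diag(t,1,...,1)
  set D : Matrix (Fin r) (Fin r) ℂ := Matrix.diagonal (fun i => if i = i0 then t else 1)
    with hD
  have hdetD : D.det = t := by
    rw [hD, Matrix.det_diagonal]
    simp
  have hDunit : IsUnit D.det := hdetD ▸ hA
  -- S := A * D⁻¹ has determinant 1
  have hS : (A * D⁻¹).det = 1 := by
    rw [Matrix.det_mul, Matrix.det_nonsing_inv, hdetD, ← ht, Ring.mul_inverse_cancel _ hA]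
  have hSD : (A * D⁻¹) * D = A := by
    rw [mul_assoc, Matrix.nonsing_inv_mul D hDunit, mul_one]
  have hfA : f A = f D := by
    rw [← hSD]; exact hinv _ _ hS hDunit
  rw [hfA, hf D, hdetD]
  congr 1
  -- evaluate the polynomial
  have := MvPolynomial.eval₂_comp_left (Polynomial.evalRingHom t) Polynomial.C g P
  simp only [Polynomial.coe_evalRingHom] at this
  rw [this]
  have h1 : (Polynomial.evalRingHom t).comp Polynomial.C = RingHom.id ℂ := by
    ext c; simp
  rw [h1, MvPolynomial.eval₂_id]
  refine congrArg (fun v => MvPolynomial.eval v P) ?_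
  funext ij
  rcases ij with ⟨i, j⟩
  simp only [hg, hD, Matrix.diagonal_apply]
  by_cases hij : i = j
  · subst hij
    by_cases h : i = i0 <;> simp [h]
  · have hne : ¬(i = i0 ∧ j = i0) := fun h => hij (h.1.trans h.2.symm)
    simp [hij, if_neg hne]
end

section
/- Let R be a commutative ring which is an integral domain and which is a finitely generated, formally smooth ℂ-algebra (i.e., a smooth affine ℂ-algebra). If f ∈ R satisfies d f = 0 in the module of Kähler differentials Ω_{R/ℂ}, then f lies in the image of the structure map ℂ → R; that is, f is a constant. -/
/-!
Put `L = Frac R`. If `f` were transcendental over `ℂ`, extend `{f}` to a transcendence basis `t`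
of `L` and let `F = ℂ(t \ {f})`. Since `d f = 0`, the universal `F`-derivation of `L` kills `f`,
hence the whole field `ℂ(t)`; as `L / ℂ(t)` is algebraic, hence separable in characteristic zero,
it vanishes on `L`, i.e. `Ω_{L/F} = 0`. An essentially finite type field extension with vanishing
differentials is separable algebraic, contradicting the transcendence of `f` over `F`. So `f` is
algebraic over `ℂ`, and `ℂ` is algebraically closed.
-/

open KaehlerDifferential Polynomial

namespace Derivation

variable {K L M : Type*} [CommRing K] [Field L] [Algebra K L] [AddCommGroup M] [Module L M]
  [Module K M] (D : Derivation K L M)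

def constants : Subfield L where
  carrier := {x | D x = 0}
  mul_mem' {a b} ha hb := by simp_all [leibniz]
  one_mem' := D.map_one_eq_zero
  add_mem' ha hb := by simp_all
  zero_mem' := D.map_zero
  neg_mem' ha := by simp_all
  inv_mem' a ha := by simp_all [leibniz_inv]

@[simp]
lemma mem_constants {x : L} : x ∈ D.constants ↔ D x = 0 := Iff.rfl

lemma apply_eq_zero_of_isSeparable {E : Type*} [Field E] [Algebra E L]
    (hD : ∀ e : E, D (algebraMap E L e) = 0) {x : L} (hx : IsSeparable E x) : D x = 0 := by
  set p := (minpoly E x).map (algebraMap E L)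
  have hcoeff : D.mapCoeffs p = 0 := by ext n; simp [p, hD]
  have hp' : (derivative p).eval x ≠ 0 := by
    rw [derivative_map, eval_map_algebraMap]
    exact hx.aeval_derivative_ne_zero (minpoly.aeval E x)
  have := D.apply_eval_eq x p
  rw [eval_map_algebraMap, minpoly.aeval, map_zero, hcoeff, map_zero, zero_add, eq_comm,
    smul_eq_zero] at this
  exact this.resolve_left hp'

end Derivation

lemma KaehlerDifferential.subsingleton_of_forall_D_eq_zero {R S : Type*} [CommRing R]
    [CommRing S] [Algebra R S] (h : ∀ x : S, D R S x = 0) : Subsingleton Ω[S⁄R] := by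
  rw [← Submodule.subsingleton_iff S, ← subsingleton_iff_bot_eq_top, ← span_range_derivation R S,
    eq_comm, Submodule.span_eq_bot]
  rintro _ ⟨x, rfl⟩
  exact h x

lemma IsAlgClosed.exists_algebraMap_eq_of_isAlgebraic {k A : Type*} [Field k] [IsAlgClosed k]
    [CommRing A] [IsDomain A] [Algebra k A] {x : A} (hx : IsAlgebraic k x) :
    ∃ c, algebraMap k A c = x :=
  minpoly.degree_eq_one_iff.mp (degree_eq_one_of_irreducible k (minpoly.irreducible hx.isIntegral))

lemma AlgebraicIndepOn.transcendental_adjoin_sdiff_singleton {k L : Type*} [Field k] [Field L]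
    [Algebra k L] {t : Set L} (ht : AlgebraicIndepOn k id t) {f : L} (hf : f ∈ t) :
    Transcendental (IntermediateField.adjoin k (t \ {f})) f := by
  rw [IntermediateField.transcendental_adjoin_iff]
  rw [← Set.insert_sdiff_self_of_mem hf] at ht
  have := ((AlgebraicIndepOn.insert_iff (Set.notMem_sdiff_of_mem (Set.mem_singleton f))).mp ht).2
  rwa [Set.image_id] at this

theorem KaehlerDifferential.isAlgebraic_of_D_eq_zero {k L : Type*} [Field k] [CharZero k]
    [Field L] [Algebra k L] [Algebra.EssFiniteType k L] {f : L} (hf : D k L f = 0) :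
    IsAlgebraic k f := by
  by_contra hf_tr
  obtain ⟨t, hft, ht⟩ := exists_isTranscendenceBasis_superset (R := k) (s := {f})
    ((algebraicIndependent_singleton_iff (⟨f, rfl⟩ : ({f} : Set L))).mpr hf_tr)
  set F := IntermediateField.adjoin k (t \ {f})
  have hf_F : Transcendental F f :=
    AlgebraicIndepOn.transcendental_adjoin_sdiff_singleton ht.1 (hft rfl)
  have ht_const : t ⊆ (D F L).constants := by
    intro y hy
    by_cases hyf : y = f
    · simpa [hyf, hf] using (map_D k F L L f).symm
    · exact (D F L).map_algebraMap ⟨y, IntermediateField.subset_adjoin k _ ⟨hy, hyf⟩⟩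
  have hD : ∀ x : L, D F L x = 0 := by
    set E := IntermediateField.adjoin k t
    have hE : E ≤ (D F L).constants.toIntermediateField fun c ↦
        (D F L).map_algebraMap (algebraMap k F c) := IntermediateField.adjoin_le_iff.mpr ht_const
    have := ht.isAlgebraic_field
    rw [Subtype.range_coe] at this
    exact fun x ↦ (D F L).apply_eq_zero_of_isSeparable (fun e ↦ hE e.2)
      (Algebra.IsSeparable.isSeparable E x)
  have : Algebra.FormallyUnramified F L := ⟨subsingleton_of_forall_D_eq_zero hD⟩
  have : Algebra.EssFiniteType F L := .of_comp k F L
  have := Algebra.FormallyUnramified.isSeparable F L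
  exact hf_F (Algebra.IsSeparable.isIntegral F f).isAlgebraic

theorem kaehler_differential_zero_implies_constant_general (R : Type) [CommRing R] [IsDomain R]
    [Algebra ℂ R] [Algebra.FiniteType ℂ R]
    (f : R) (hf : KaehlerDifferential.D ℂ R f = 0) :
    ∃ c : ℂ, algebraMap ℂ R c = f := by
  let K := FractionRing R
  have : Algebra.EssFiniteType R K := .of_isLocalization K (nonZeroDivisors R)
  have : Algebra.EssFiniteType ℂ K := .comp ℂ R K
  have hfK : D ℂ K (algebraMap R K f) = 0 := by rw [← map_D ℂ ℂ R K f, hf, map_zero]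
  have hf_alg := (isAlgebraic_algHom_iff (IsScalarTower.toAlgHom ℂ R K)
    (IsFractionRing.injective R K)).mp (isAlgebraic_of_D_eq_zero hfK)
  exact IsAlgClosed.exists_algebraMap_eq_of_isAlgebraic hf_alg

/-- Let `R` be an integral domain which is a finitely generated, formally
smooth `ℂ`-algebra (a smooth affine `ℂ`-algebra).  If `f ∈ R` has vanishing universal
differential `d f = 0` in `Ω_{R/ℂ}`, then `f` is a constant, i.e. lies in the image of
`ℂ → R`. -/
theorem kaehler_differential_zero_implies_constant (R : Type) [CommRing R] [IsDomain R]
    [Algebra ℂ R] [Algebra.FiniteType ℂ R] [Algebra.FormallySmooth ℂ R]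
    (f : R) (hf : KaehlerDifferential.D ℂ R f = 0) :
    ∃ c : ℂ, algebraMap ℂ R c = f :=
  kaehler_differential_zero_implies_constant_general R f hf
end

section
/- Let R be a commutative ring which is an integral domain and a finitely generated, formally smooth ℂ-algebra, and let n ≥ 1. If a matrix F ∈ M_n(R) satisfies d(F_{ij}) = 0 in Ω_{R/ℂ} for every entry F_{ij}, then there exists C ∈ M_n(ℂ) such that F is the entrywise image of C under the structure map ℂ → R. Moreover, if F is invertible in M_n(R), then C is invertible in M_n(ℂ). -/
/-!
Pick a maximal ideal `m` of `R`; by the Nullstellensatz `R ⧸ m = ℂ`. Formal smoothness splits the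
conormal sequence at `m` and makes `Ω_{R/ℂ}` projective, which yields a derivation `δ` of `R` with
values in `m` that is congruent to the identity modulo `m²` on `m`. By Leibniz, `δ` acts as
multiplication by `k` on `m ^ k` modulo `m ^ (k + 1)` (an Euler vector field at `m`). Hence if
`dx = 0` and `c = x mod m`, then `δ (x - c) = 0`, and since `k` is invertible in characteristic
zero, `x - c ∈ m ^ k` for all `k`; Krull's intersection theorem gives `x = c`.
-/

open KaehlerDifferential

theorem Matrix.isUnit_map_iff {n R S : Type*} [Fintype n] [DecidableEq n] [CommRing R]
    [CommRing S] (f : R →+* S) [IsLocalHom f] (M : Matrix n n R) :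
    IsUnit (M.map f) ↔ IsUnit M := by
  rw [isUnit_iff_isUnit_det, isUnit_iff_isUnit_det, ← RingHom.mapMatrix_apply,
    ← RingHom.map_det, _root_.isUnit_map_iff]

theorem IsAlgClosed.bijective_algebraMap_quotient {K R : Type*} [Field K] [IsAlgClosed K]
    [CommRing R] [Algebra K R] [Algebra.FiniteType K R] (m : Ideal R) [m.IsMaximal] :
    Function.Bijective (algebraMap K (R ⧸ m)) :=
  letI : Field (R ⧸ m) := Ideal.Quotient.field m
  haveI : Algebra.FiniteType K (R ⧸ m) :=
    .of_surjective (Ideal.Quotient.mkₐ K m) (Ideal.Quotient.mkₐ_surjective K m)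
  haveI : Module.Finite K (R ⧸ m) := finite_of_finite_type_of_isJacobsonRing K (R ⧸ m)
  haveI : Algebra.IsIntegral K (R ⧸ m) := .of_finite K _
  IsAlgClosed.algebraMap_bijective_of_isIntegral

theorem Algebra.FormallySmooth.exists_derivation_sub_mem_ker_sq {K R A : Type*} [CommRing K]
    [CommRing R] [CommRing A] [Algebra K R] [Algebra K A] [Algebra R A] [IsScalarTower K R A]
    [Algebra.FormallySmooth K R] [Algebra.FormallySmooth K A]
    (hf : Function.Surjective (algebraMap R A)) :
    ∃ δ : Derivation K R R, (∀ x, δ x ∈ RingHom.ker (algebraMap R A)) ∧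
      ∀ z ∈ RingHom.ker (algebraMap R A), δ z - z ∈ RingHom.ker (algebraMap R A) ^ 2 := by
  set I := RingHom.ker (algebraMap R A)
  obtain ⟨l, hl⟩ := (Algebra.FormallySmooth.iff_split_injection hf).mp ‹_›
  obtain ⟨h, hh⟩ := Module.projective_lifting_property I.toCotangent
    (l ∘ₗ TensorProduct.mk R A Ω[R⁄K] 1) I.toCotangent_surjective
  refine ⟨(I.subtype ∘ₗ h).compDer (D K R), fun x ↦ (h _).2, fun z hz ↦ ?_⟩
  have hcot : I.toCotangent (h (D K R z)) = I.toCotangent ⟨z, hz⟩ := by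
    rw [← LinearMap.comp_apply, hh]
    exact LinearMap.congr_fun hl (I.toCotangent ⟨z, hz⟩)
  exact I.toCotangent_eq.mp hcot

section EulerDerivation

variable {A R : Type*} [CommSemiring A] [CommRing R] [Algebra A R] (δ : Derivation A R R)
  {I : Ideal R}

theorem Derivation.sub_natCast_mul_mem_pow_succ (hδ : ∀ x, δ x ∈ I)
    (hδI : ∀ z ∈ I, δ z - z ∈ I ^ 2) (k : ℕ) {x : R} (hx : x ∈ I ^ k) :
    δ x - k * x ∈ I ^ (k + 1) := by
  induction k generalizing x with
  | zero => simpa using hδ x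
  | succ k ih =>
    rw [pow_succ] at hx
    refine Submodule.mul_induction_on hx (fun y hy z hz ↦ ?_) (fun a b ha hb ↦ ?_)
    · have hyz : δ (y * z) - ((k + 1 : ℕ) : R) * (y * z)
          = y * (δ z - z) + z * (δ y - k * y) := by
        rw [Derivation.leibniz, smul_eq_mul, smul_eq_mul]; push_cast; ring
      rw [hyz]
      refine add_mem ?_ ?_
      · simpa only [← pow_add] using Ideal.mul_mem_mul hy (hδI z hz)
      · simpa only [← pow_succ'] using Ideal.mul_mem_mul hz (ih hy)
    · rw [map_add, mul_add, add_sub_add_comm]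
      exact add_mem ha hb

theorem Derivation.mem_pow_of_apply_eq_zero {K : Type*} [Field K] [CharZero K] [Algebra K R]
    (δ : Derivation K R R) (hδ : ∀ x, δ x ∈ I) (hδI : ∀ z ∈ I, δ z - z ∈ I ^ 2) {y : R}
    (hyI : y ∈ I) (hy : δ y = 0) (k : ℕ) : y ∈ I ^ k := by
  induction k with
  | zero => simp
  | succ k ih =>
    rcases k.eq_zero_or_pos with rfl | hk
    · simpa using hyI
    have hky : -((k : R) * y) ∈ I ^ (k + 1) := by
      simpa [hy] using δ.sub_natCast_mul_mem_pow_succ hδ hδI k ih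
    have hunit : IsUnit (k : R) := by
      simpa using (isUnit_iff_ne_zero.mpr (Nat.cast_ne_zero.mpr hk.ne' : (k : K) ≠ 0)).map
        (algebraMap K R)
    exact (Ideal.unit_mul_mem_iff_mem _ hunit).mp (neg_mem_iff.mp hky)

end EulerDerivation

theorem exists_algebraMap_eq_of_D_eq_zero {K R : Type*} [Field K] [IsAlgClosed K] [CharZero K]
    [CommRing R] [IsDomain R] [Algebra K R] [Algebra.FiniteType K R]
    [Algebra.FormallySmooth K R] {x : R} (hx : D K R x = 0) :
    ∃ c : K, algebraMap K R c = x := by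
  obtain ⟨m, hm⟩ := Ideal.exists_maximal R
  have hbij := IsAlgClosed.bijective_algebraMap_quotient (K := K) m
  have : Algebra.FormallySmooth K (R ⧸ m) :=
    .of_equiv (AlgEquiv.ofBijective (Algebra.ofId K (R ⧸ m)) hbij)
  obtain ⟨δ, hδ, hδm⟩ :=
    Algebra.FormallySmooth.exists_derivation_sub_mem_ker_sq (K := K) (A := R ⧸ m) Ideal.Quotient.mk_surjective
  rw [Ideal.Quotient.algebraMap_eq, Ideal.mk_ker] at hδ hδm
  obtain ⟨c, hc⟩ := hbij.2 (Ideal.Quotient.mk m x)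
  refine ⟨c, (sub_eq_zero.mp ?_).symm⟩
  have hym : x - algebraMap K R c ∈ m := by
    rw [← Ideal.Quotient.eq, ← hc, Ideal.Quotient.mk_algebraMap]
  have hδy : δ (x - algebraMap K R c) = 0 := by
    rw [← Derivation.liftKaehlerDifferential_comp_D, map_sub, hx, Derivation.map_algebraMap,
      sub_zero, map_zero]
  have : IsNoetherianRing R := Algebra.FiniteType.isNoetherianRing K R
  have hmem : x - algebraMap K R c ∈ ⨅ k : ℕ, m ^ k :=
    Submodule.mem_iInf _ |>.mpr (δ.mem_pow_of_apply_eq_zero hδ hδm hym hδy)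
  rwa [Ideal.iInf_pow_eq_bot_of_isDomain m hm.ne_top, Ideal.mem_bot] at hmem

theorem matrix_with_flat_entries_is_constant_general (R : Type) [CommRing R] [IsDomain R]
    [Algebra ℂ R] [Algebra.FiniteType ℂ R] [Algebra.FormallySmooth ℂ R]
    (n : ℕ) (F : Matrix (Fin n) (Fin n) R)
    (hF : ∀ i j : Fin n, KaehlerDifferential.D ℂ R (F i j) = 0) :
    ∃ C : Matrix (Fin n) (Fin n) ℂ,
      F = C.map (algebraMap ℂ R) ∧ (IsUnit F → IsUnit C) := by
  choose C hC using fun i j ↦ exists_algebraMap_eq_of_D_eq_zero (hF i j)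
  have hFC : F = (Matrix.of C).map (algebraMap ℂ R) := by
    ext i j
    exact (hC i j).symm
  refine ⟨Matrix.of C, hFC, fun hFu ↦ ?_⟩
  rwa [hFC, Matrix.isUnit_map_iff] at hFu

/-- Let `R` be an integral domain which is a finitely generated, formally
smooth `ℂ`-algebra, and `n ≥ 1`.  If every entry of a matrix `F ∈ M_n(R)` has vanishing
universal differential in `Ω_{R/ℂ}`, then `F` is the entrywise image of a constant matrix
`C ∈ M_n(ℂ)`; moreover if `F` is invertible in `M_n(R)`, then `C` is invertible in
`M_n(ℂ)`. -/
theorem matrix_with_flat_entries_is_constant (R : Type) [CommRing R] [IsDomain R]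
    [Algebra ℂ R] [Algebra.FiniteType ℂ R] [Algebra.FormallySmooth ℂ R]
    (n : ℕ) (hn : 1 ≤ n) (F : Matrix (Fin n) (Fin n) R)
    (hF : ∀ i j : Fin n, KaehlerDifferential.D ℂ R (F i j) = 0) :
    ∃ C : Matrix (Fin n) (Fin n) ℂ,
      F = C.map (algebraMap ℂ R) ∧ (IsUnit F → IsUnit C) :=
  matrix_with_flat_entries_is_constant_general R n F hF
end
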